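/- Let v(z) = u(z)² + u′(z), a rational function with possible poles only at the z_i, w¹_j and w⁰_j. Then: (a) for each j ∈ {1,…,m₁}, v extends analytically to a neighborhood of w¹_j (i.e., v has no pole at w¹_j) if and only if the Bethe equation (RB1_j) holds; (b) for each j ∈ {1,…,m₀}, the function z ↦ v(z) − 2/(z−w⁰_j)² − r_j/(z−w⁰_j), where r_j = Σ_{i=1}^N k_i/(w⁰_j−z_i), extends analytically to a neighborhood of w⁰_j if and only if the Bethe equation (RB0_j) holds. -/

import Mathlib

/-!
Near a simple pole `a` of `u` with residue `ε`, write `u = ε/(s-a) + h` and `u' = -ε/(s-a)² + h'`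
with `h, h'` analytic at `a`. Then `u² + u' = (ε² - ε)/(s-a)² + 2εh(s)/(s-a) + (h² + h')`, so
once the double pole `(ε² - ε)/(s-a)²` and a prescribed simple pole `c/(s-a)` are removed, what is
left is regular at `a` iff `2εh(a) = c`. For `a = w¹ⱼ` we have `ε = 1`, `c = 0`, and for `a = w⁰ⱼ`
we have `ε = -1`, `c = rⱼ`; in both cases `2εh(a) = c` is the Bethe equation at `a`.
-/

open Finset Topology

/-- `u(z) = -Σ_i ℓ_i/(z - z_i) + Σ_j 1/(z - w¹_j) - Σ_j 1/(z - w⁰_j)`. -/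
noncomputable def uG {N m₁ m₀ : ℕ} (l : Fin N → ℂ) (z : Fin N → ℂ)
    (w1 : Fin m₁ → ℂ) (w0 : Fin m₀ → ℂ) (s : ℂ) : ℂ :=
  -∑ i, l i / (s - z i) + ∑ j, 1 / (s - w1 j) - ∑ j, 1 / (s - w0 j)

/-- `u′(z) = Σ_i ℓ_i/(z - z_i)² - Σ_j 1/(z - w¹_j)² + Σ_j 1/(z - w⁰_j)²`. -/
noncomputable def uG' {N m₁ m₀ : ℕ} (l : Fin N → ℂ) (z : Fin N → ℂ)
    (w1 : Fin m₁ → ℂ) (w0 : Fin m₀ → ℂ) (s : ℂ) : ℂ :=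
  ∑ i, l i / (s - z i) ^ 2 - ∑ j, 1 / (s - w1 j) ^ 2 + ∑ j, 1 / (s - w0 j) ^ 2

lemma exists_analyticAt_eq_div_sub_add_iff {a : ℂ} {h g : ℂ → ℂ} (hh : AnalyticAt ℂ h a)
    (hg : AnalyticAt ℂ g a) :
    (∃ G : ℂ → ℂ, AnalyticAt ℂ G a ∧ ∀ᶠ s in 𝓝[≠] a, G s = h s / (s - a) + g s) ↔
      h a = 0 := by
  constructor
  · rintro ⟨G, hG, hGeq⟩
    have hmul : ∀ᶠ s in 𝓝[≠] a, (s - a) * (G s - g s) = h s := by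
      filter_upwards [hGeq, self_mem_nhdsWithin] with s hs hsa
      rw [hs, add_sub_cancel_right, mul_div_cancel₀ _ (sub_ne_zero.mpr hsa)]
    have hlim : Filter.Tendsto (fun s => (s - a) * (G s - g s)) (𝓝[≠] a)
        (𝓝 ((a - a) * (G a - g a))) :=
      (((analyticAt_id.sub analyticAt_const).mul (hG.sub hg)).continuousAt.tendsto).mono_left
        nhdsWithin_le_nhds
    have := tendsto_nhds_unique (hlim.congr' hmul)
      (hh.continuousAt.tendsto.mono_left nhdsWithin_le_nhds)
    simpa using this.symm
  · intro ha
    obtain ⟨p, hp⟩ := hh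
    -- `dslope h a` is analytic at `a` and equals `h s / (s - a)` off `a` because `h a = 0`.
    refine ⟨fun s => dslope h a s + g s, hp.has_fpower_series_dslope_fslope.analyticAt.add hg, ?_⟩
    filter_upwards [self_mem_nhdsWithin] with s hs
    rw [dslope_of_ne _ hs]
    simp [slope, ha, div_eq_inv_mul]

lemma exists_analyticAt_sq_add_iff_of_simple_pole {a ε c : ℂ} {u u' h h' : ℂ → ℂ}
    (hh : AnalyticAt ℂ h a) (hh' : AnalyticAt ℂ h' a)
    (hu : ∀ s, u s = ε / (s - a) + h s) (hu' : ∀ s, u' s = -ε / (s - a) ^ 2 + h' s) :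
    (∃ G : ℂ → ℂ, AnalyticAt ℂ G a ∧ ∀ᶠ s in 𝓝[≠] a,
        G s = u s ^ 2 + u' s - (ε ^ 2 - ε) / (s - a) ^ 2 - c / (s - a)) ↔
      2 * ε * h a = c := by
  have hsplit : ∀ s, u s ^ 2 + u' s - (ε ^ 2 - ε) / (s - a) ^ 2 - c / (s - a) =
      (2 * ε * h s - c) / (s - a) + (h s ^ 2 + h' s) := by
    intro s
    rw [hu, hu']
    generalize s - a = x
    ring
  simp only [hsplit]
  exact (exists_analyticAt_eq_div_sub_add_iff (h := fun s => 2 * ε * h s - c)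
    ((analyticAt_const.mul hh).sub analyticAt_const) ((hh.pow 2).add hh')).trans sub_eq_zero

lemma analyticAt_sum_div_sub_pow {ι : Type*} (S : Finset ι) (c p : ι → ℂ) (n : ℕ) {a : ℂ}
    (hp : ∀ i ∈ S, p i ≠ a) : AnalyticAt ℂ (fun s => ∑ i ∈ S, c i / (s - p i) ^ n) a :=
  Finset.analyticAt_fun_sum S fun i hi => analyticAt_const.div
    ((analyticAt_id.sub analyticAt_const).pow n) (pow_ne_zero _ (sub_ne_zero.mpr (hp i hi).symm))

lemma analyticAt_sum_div_sub {ι : Type*} (S : Finset ι) (c p : ι → ℂ) {a : ℂ}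
    (hp : ∀ i ∈ S, p i ≠ a) : AnalyticAt ℂ (fun s => ∑ i ∈ S, c i / (s - p i)) a := by
  simpa using analyticAt_sum_div_sub_pow S c p 1 hp

section

variable {N m₁ m₀ : ℕ} (l : Fin N → ℂ) (z : Fin N → ℂ) (w1 : Fin m₁ → ℂ) (w0 : Fin m₀ → ℂ)

theorem regular_at_w1_iff_bethe {j : Fin m₁} (hw1 : Function.Injective w1)
    (hz : ∀ i, z i ≠ w1 j) (hw0 : ∀ t, w1 j ≠ w0 t) :
    (∃ G : ℂ → ℂ, AnalyticAt ℂ G (w1 j) ∧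
        ∀ᶠ s in 𝓝[≠] (w1 j), G s = (uG l z w1 w0 s) ^ 2 + uG' l z w1 w0 s) ↔
      ∑ i, l i / (w1 j - z i) - ∑ s ∈ univ.erase j, 1 / (w1 j - w1 s)
        + ∑ s, 1 / (w1 j - w0 s) = 0 := by
  set h : ℂ → ℂ := fun s =>
    -∑ i, l i / (s - z i) + ∑ t ∈ univ.erase j, 1 / (s - w1 t) - ∑ t, 1 / (s - w0 t)
  set h' : ℂ → ℂ := fun s =>
    ∑ i, l i / (s - z i) ^ 2 - ∑ t ∈ univ.erase j, 1 / (s - w1 t) ^ 2 + ∑ t, 1 / (s - w0 t) ^ 2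
  have hw1j : ∀ t ∈ univ.erase j, w1 t ≠ w1 j := fun t ht => hw1.ne (ne_of_mem_erase ht)
  have hh : AnalyticAt ℂ h (w1 j) :=
    ((analyticAt_sum_div_sub _ l z fun i _ => hz i).neg.add
      (analyticAt_sum_div_sub _ _ w1 hw1j)).sub
      (analyticAt_sum_div_sub _ _ w0 fun t _ => (hw0 t).symm)
  have hh' : AnalyticAt ℂ h' (w1 j) :=
    ((analyticAt_sum_div_sub_pow _ l z 2 fun i _ => hz i).sub
      (analyticAt_sum_div_sub_pow _ _ w1 2 hw1j)).add
      (analyticAt_sum_div_sub_pow _ _ w0 2 fun t _ => (hw0 t).symm)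
  have key := exists_analyticAt_sq_add_iff_of_simple_pole (ε := 1) (c := 0) hh hh'
    (u := uG l z w1 w0) (u' := uG' l z w1 w0)
    (fun s => by simp only [uG, h, ← add_sum_erase _ _ (mem_univ j)]; ring)
    (fun s => by simp only [uG', h', ← add_sum_erase _ _ (mem_univ j)]; ring)
  norm_num only [zero_div, sub_zero] at key
  rw [key]
  constructor
  · intro H; linear_combination (-1 / 2 : ℂ) * H
  · intro H; linear_combination (-2 : ℂ) * H

theorem regular_at_w0_iff_bethe (k : Fin N → ℂ) {j : Fin m₀}
    (hw0 : Function.Injective w0) (hz : ∀ i, z i ≠ w0 j) (hw1 : ∀ t, w1 t ≠ w0 j) :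
    (∃ G : ℂ → ℂ, AnalyticAt ℂ G (w0 j) ∧
        ∀ᶠ s in 𝓝[≠] (w0 j), G s = (uG l z w1 w0 s) ^ 2 + uG' l z w1 w0 s
          - 2 / (s - w0 j) ^ 2 - (∑ i, k i / (w0 j - z i)) / (s - w0 j)) ↔
      ∑ i, (k i / 2 - l i) / (w0 j - z i) + ∑ s, 1 / (w0 j - w1 s)
        - ∑ s ∈ univ.erase j, 1 / (w0 j - w0 s) = 0 := by
  set h : ℂ → ℂ := fun s =>
    -∑ i, l i / (s - z i) + ∑ t, 1 / (s - w1 t) - ∑ t ∈ univ.erase j, 1 / (s - w0 t)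
  set h' : ℂ → ℂ := fun s =>
    ∑ i, l i / (s - z i) ^ 2 - ∑ t, 1 / (s - w1 t) ^ 2 + ∑ t ∈ univ.erase j, 1 / (s - w0 t) ^ 2
  have hw0j : ∀ t ∈ univ.erase j, w0 t ≠ w0 j := fun t ht => hw0.ne (ne_of_mem_erase ht)
  have hh : AnalyticAt ℂ h (w0 j) :=
    ((analyticAt_sum_div_sub _ l z fun i _ => hz i).neg.add
      (analyticAt_sum_div_sub _ _ w1 fun t _ => hw1 t)).sub
      (analyticAt_sum_div_sub _ _ w0 hw0j)
  have hh' : AnalyticAt ℂ h' (w0 j) :=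
    ((analyticAt_sum_div_sub_pow _ l z 2 fun i _ => hz i).sub
      (analyticAt_sum_div_sub_pow _ _ w1 2 fun t _ => hw1 t)).add
      (analyticAt_sum_div_sub_pow _ _ w0 2 hw0j)
  have key := exists_analyticAt_sq_add_iff_of_simple_pole (ε := -1)
    (c := ∑ i, k i / (w0 j - z i)) hh hh' (u := uG l z w1 w0) (u' := uG' l z w1 w0)
    (fun s => by simp only [uG, h, ← add_sum_erase _ _ (mem_univ j)]; ring)
    (fun s => by simp only [uG', h', ← add_sum_erase _ _ (mem_univ j)]; ring)
  norm_num only at key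
  have hk : ∑ i, (k i / 2 - l i) / (w0 j - z i) =
      (∑ i, k i / (w0 j - z i)) / 2 - ∑ i, l i / (w0 j - z i) := by
    rw [sum_div, ← sum_sub_distrib]
    exact sum_congr rfl fun i _ => by ring
  rw [key, hk]
  constructor
  · intro H; linear_combination (-1 / 2 : ℂ) * H
  · intro H; linear_combination (-2 : ℂ) * H

end

theorem regular_iff_bethe_regular_sing (N m₁ m₀ : ℕ)
    (l k : Fin N → ℂ) (z : Fin N → ℂ) (w1 : Fin m₁ → ℂ) (w0 : Fin m₀ → ℂ)
    (hw1inj : Function.Injective w1)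
    (hw0inj : Function.Injective w0)
    (hzw1 : ∀ i j, z i ≠ w1 j) (hzw0 : ∀ i j, z i ≠ w0 j)
    (hw1w0 : ∀ i j, w1 i ≠ w0 j) :
    (∀ j : Fin m₁,
      (∃ G : ℂ → ℂ, AnalyticAt ℂ G (w1 j) ∧
          ∀ᶠ s in 𝓝[≠] (w1 j), G s = (uG l z w1 w0 s) ^ 2 + uG' l z w1 w0 s)
        ↔ ∑ i, l i / (w1 j - z i) - ∑ s ∈ univ.erase j, 1 / (w1 j - w1 s)
            + ∑ s, 1 / (w1 j - w0 s) = 0) ∧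
    (∀ j : Fin m₀,
      (∃ G : ℂ → ℂ, AnalyticAt ℂ G (w0 j) ∧
          ∀ᶠ s in 𝓝[≠] (w0 j), G s = (uG l z w1 w0 s) ^ 2 + uG' l z w1 w0 s
            - 2 / (s - w0 j) ^ 2 - (∑ i, k i / (w0 j - z i)) / (s - w0 j))
        ↔ ∑ i, (k i / 2 - l i) / (w0 j - z i) + ∑ s, 1 / (w0 j - w1 s)
            - ∑ s ∈ univ.erase j, 1 / (w0 j - w0 s) = 0) :=
  ⟨fun j => regular_at_w1_iff_bethe l z w1 w0 hw1inj (hzw1 · j) (hw1w0 j),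
    fun j => regular_at_w0_iff_bethe l z w1 w0 k hw0inj (hzw0 · j)
      (hw1w0 · j)⟩
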